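/- Let ℤ₂ be the ring of 2-adic integers with fraction field ℚ₂, let L be a finitely generated free ℤ₂-module, σ a reflection on L, and T = (ℚ₂ ⊗ L)/L the quotient of ℚ₂ ⊗ L by the image of L, with the action on T induced by σ. Let T₀⁻(σ) ⊆ T denote the image in T of ℚ₂ ⊗ ker(1+σ). Then the map sending a strict marking (b, β) of σ to the class of (1/2)·b in T is constant on equivalence classes and induces a bijection from the set of markings of σ to the set of elements h ∈ T such that (i) h ∈ T₀⁻(σ), (ii) 2h = 0, and (iii) h ≠ 0 if σ is nontrivial mod 2. -/

import Mathlib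

open scoped TensorProduct

/-- The natural map `L → ℚ₂ ⊗ L` for a `ℤ₂`-module `L`. -/
noncomputable def latticeToPadic (L : Type*) [AddCommGroup L] [Module ℤ_[2] L] :
    L →ₗ[ℤ_[2]] ℚ_[2] ⊗[ℤ_[2]] L :=
  TensorProduct.mk ℤ_[2] ℚ_[2] L 1

/-- The `2`-adic torus `T = (ℚ₂ ⊗ L)/L`. -/
abbrev PadicTorus (L : Type*) [AddCommGroup L] [Module ℤ_[2] L] :=
  (ℚ_[2] ⊗[ℤ_[2]] L) ⧸ (LinearMap.range (latticeToPadic L)).toAddSubgroup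

/-- The quotient map `ℚ₂ ⊗ L → T`. -/
noncomputable def padicTorusMk (L : Type*) [AddCommGroup L] [Module ℤ_[2] L] :
    (ℚ_[2] ⊗[ℤ_[2]] L) →+ PadicTorus L :=
  QuotientAddGroup.mk' _

/-- A strict marking for a reflection `σ` on a complete lattice over `ℤ₂`. -/
def IsStrictMarkingP {L : Type*} [AddCommGroup L] [Module ℤ_[2] L]
    (σ : L →ₗ[ℤ_[2]] L) (p : L × (L →ₗ[ℤ_[2]] ℤ_[2])) : Prop :=
  ∀ x : L, σ x = x + p.2 x • p.1

/-- The class of `(1/2)·b` in the torus `T = (ℚ₂ ⊗ L)/L` for a strict marking `(b, β)`. -/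
noncomputable def markingImageP {L : Type*} [AddCommGroup L] [Module ℤ_[2] L]
    (p : L × (L →ₗ[ℤ_[2]] ℤ_[2])) : PadicTorus L :=
  padicTorusMk L ((2⁻¹ : ℚ_[2]) • latticeToPadic L p.1)

/-- The set of elements `h ∈ T` that are torus markings of `σ`: `h` lies in the image
`T₀⁻(σ)` of `ℚ₂ ⊗ ker(1+σ)`, `2h = 0`, and `h ≠ 0` if `σ` is nontrivial mod 2. -/
def PadicTorusMarkings {L : Type*} [AddCommGroup L] [Module ℤ_[2] L]
    (σ : L →ₗ[ℤ_[2]] L) : Set (PadicTorus L) :=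
  {h : PadicTorus L |
    h ∈ ⇑(padicTorusMk L) ''
        ((Submodule.span ℚ_[2] (⇑(latticeToPadic L) '' {x : L | σ x = -x}) :
            Submodule ℚ_[2] (ℚ_[2] ⊗[ℤ_[2]] L)) : Set (ℚ_[2] ⊗[ℤ_[2]] L)) ∧
    (2 : ℤ) • h = 0 ∧
    ((¬ ∀ x : L, ∃ y : L, σ x - x = (2 : ℤ_[2]) • y) → h ≠ 0)}

set_option maxHeartbeats 3200000 in
/-- for a reflection `σ` on a finitely generated free `ℤ₂`-module `L`,
sending a strict marking `(b, β)` to the class of `b/2` in `T = (ℚ₂ ⊗ L)/L` is constant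
on equivalence classes and induces a bijection from markings of `σ` to the set of `h ∈ T`
with `h ∈ T₀⁻(σ)`, `2h = 0`, and `h ≠ 0` if `σ` is nontrivial mod 2. -/
theorem stmt16 (L : Type*) [AddCommGroup L] [Module ℤ_[2] L]
    [Module.Free ℤ_[2] L] [Module.Finite ℤ_[2] L]
    (σ : L →ₗ[ℤ_[2]] L) (hinv : σ ∘ₗ σ = LinearMap.id)
    (hrank : Module.finrank ℤ_[2] (LinearMap.ker (LinearMap.id + σ)) = 1) :
    (∀ p : L × (L →ₗ[ℤ_[2]] ℤ_[2]), IsStrictMarkingP σ p →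
      markingImageP p ∈ PadicTorusMarkings σ) ∧
    (∀ p q : L × (L →ₗ[ℤ_[2]] ℤ_[2]), IsStrictMarkingP σ p → IsStrictMarkingP σ q →
      (markingImageP p = markingImageP q ↔
        ∃ u : ℤ_[2]ˣ, q.1 = (u : ℤ_[2]) • p.1 ∧
          q.2 = ((u⁻¹ : ℤ_[2]ˣ) : ℤ_[2]) • p.2)) ∧
    (∀ h ∈ PadicTorusMarkings σ,
      ∃ p : L × (L →ₗ[ℤ_[2]] ℤ_[2]), IsStrictMarkingP σ p ∧ markingImageP p = h) := by
  classical
  have hσσ : ∀ x : L, σ (σ x) = x := fun x => by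
    have := LinearMap.congr_fun hinv x; simpa using this
  have hsmul : ∀ (c : ℤ_[2]) (x : L), c • x = 0 → c = 0 ∨ x = 0 := fun c x h =>
    smul_eq_zero.mp h
  set K := LinearMap.ker (LinearMap.id + σ) with hK
  have hmemK : ∀ x : L, x ∈ K ↔ σ x = -x := by
    intro x
    simp [hK, LinearMap.mem_ker, add_eq_zero_iff_eq_neg']
  set bL := Module.finBasis ℤ_[2] L with hbL
  obtain ⟨n, ⟨bK⟩⟩ := Submodule.nonempty_basis_of_pid bL K
  haveI : Module.Free ℤ_[2] K := Module.Free.of_basis bK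
  obtain ⟨v, hv0, hvspan⟩ := finrank_eq_one_iff'.mp hrank
  set e : L := (v : L) with he
  have hσe : σ e = -e := (hmemK _).mp v.2
  have he0 : e ≠ 0 := fun h => hv0 (Subtype.ext h)
  have hspan : ∀ x : L, σ x = -x → ∃ c : ℤ_[2], x = c • e := by
    intro x hx
    obtain ⟨c, hc⟩ := hvspan ⟨x, (hmemK x).mpr hx⟩
    exact ⟨c, by simpa [he] using (congrArg Subtype.val hc).symm⟩
  have hcancel : ∀ c c' : ℤ_[2], c • e = c' • e → c = c' := by
    intro c c' h
    have : (c - c') • e = 0 := by rw [sub_smul, h, sub_self]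
    rcases hsmul _ _ this with h' | h'
    · exact sub_eq_zero.mp h'
    · exact absurd h' he0
  have two_ne : (2:ℤ_[2]) ≠ 0 := by norm_num
  have two_notunit : ¬ IsUnit (2:ℤ_[2]) := by
    rw [PadicInt.not_isUnit_iff]
    have : ((2:ℕ):ℤ_[2]) = (2:ℤ_[2]) := by norm_cast
    rw [← this, PadicInt.norm_p (p := 2)]
    norm_num
  have notunit_dvd : ∀ a : ℤ_[2], ¬ IsUnit a → (2:ℤ_[2]) ∣ a := by
    intro a h
    rw [PadicInt.not_isUnit_iff] at h
    have := (PadicInt.norm_lt_one_iff_dvd a).mp h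
    exact this.imp (fun x hx => by exact_mod_cast hx)
  have dvd_notunit : ∀ a : ℤ_[2], (2:ℤ_[2]) ∣ a → ¬ IsUnit a := by
    intro a ⟨d, hd⟩ hu
    exact two_notunit (isUnit_of_mul_isUnit_left (hd ▸ hu))
  have hunit1 : ∀ u : ℤ_[2]ˣ, (2:ℤ_[2]) ∣ ((u:ℤ_[2]) - 1) := by
    intro u
    have h1 : PadicInt.toZMod ((u:ℤ_[2]) - 1) = 0 := by
      have hu : IsUnit (PadicInt.toZMod (u:ℤ_[2])) := (u.isUnit).map _
      have h2 : ∀ a : ZMod 2, IsUnit a → a = 1 := by decide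
      simp [map_sub, h2 _ hu]
    have h3 : ((u:ℤ_[2]) - 1) ∈ RingHom.ker (PadicInt.toZMod (p := 2)) := h1
    rw [PadicInt.ker_toZMod, PadicInt.maximalIdeal_eq_span_p,
      Ideal.mem_span_singleton] at h3
    exact_mod_cast h3
  have hE4 : ∀ (c : ℤ_[2]) (y : L), c • e = (2:ℤ_[2]) • y → (2:ℤ_[2]) ∣ c := by
    intro c y h
    have hy : σ y = -y := by
      have h2 : (2:ℤ_[2]) • (σ y + y) = 0 := by
        have := congrArg σ h
        rw [map_smul, map_smul, hσe] at this
        have h3 : (2:ℤ_[2]) • σ y = -(c • e) := by rw [← this, smul_neg]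
        rw [smul_add, h3, h, neg_add_cancel]
      rcases hsmul _ _ h2 with h' | h'
      · exact absurd h' two_ne
      · exact eq_neg_of_add_eq_zero_left h'
    obtain ⟨d, hd⟩ := hspan y hy
    refine ⟨d, hcancel _ _ ?_⟩
    rw [h, hd, smul_smul]
  have hprim : ∀ y : L, e = (2:ℤ_[2]) • y → False := by
    intro y h
    obtain ⟨d, hd⟩ := hE4 1 y (by rw [one_smul]; exact h)
    exact two_notunit (IsUnit.of_mul_eq_one (a := 2) d hd.symm)
  have hαex : ∀ x : L, ∃ c : ℤ_[2], σ x - x = c • e := by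
    intro x
    refine hspan _ ?_
    have : σ (σ x - x) = x - σ x := by rw [map_sub, hσσ]
    rw [this, neg_sub]
  choose αf hαf using hαex
  have hαadd : ∀ x y : L, αf (x + y) = αf x + αf y := by
    intro x y
    refine hcancel _ _ ?_
    rw [← hαf, add_smul, ← hαf, ← hαf, map_add]; abel
  have hαsmul : ∀ (c : ℤ_[2]) (x : L), αf (c • x) = c * αf x := by
    intro c x
    refine hcancel _ _ ?_
    rw [← hαf, mul_smul, ← hαf, map_smul, smul_sub]
  set α : L →ₗ[ℤ_[2]] ℤ_[2] :=
    { toFun := αf, map_add' := hαadd, map_smul' := hαsmul } with hα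
  have hαspec : ∀ x : L, σ x = x + α x • e := by
    intro x
    have := hαf x
    rw [hα]; simpa [eq_sub_iff_add_eq', eq_comm] using this.symm
  have hαe : α e = -(2:ℤ_[2]) := by
    refine hcancel _ _ ?_
    have := hαf e
    rw [hα, LinearMap.coe_mk, AddHom.coe_mk, ← this, hσe, neg_smul, two_smul]
    abel
  -- the embedding into the tensor product
  set ι := latticeToPadic L with hι
  have hιx : ∀ x : L, ι x = (1:ℚ_[2]) ⊗ₜ[ℤ_[2]] x := fun x => rfl
  set B := bL.baseChange ℚ_[2] with hB
  have halg_inj : Function.Injective (algebraMap ℤ_[2] ℚ_[2]) := IsFractionRing.injective _ _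
  have hcoord : ∀ (x : L) (i), B.repr (ι x) i = algebraMap ℤ_[2] ℚ_[2] (bL.repr x i) := by
    intro x i
    rw [hιx, hB, Module.Basis.baseChange_repr_tmul, Algebra.algebraMap_eq_smul_one]
  have hι_inj : Function.Injective ι := by
    intro x y h
    have : ∀ i, bL.repr x i = bL.repr y i := by
      intro i
      apply halg_inj
      rw [← hcoord, ← hcoord, h]
    exact bL.repr.injective (Finsupp.ext this)
  have hsm : ∀ (c : ℤ_[2]) (z : ℚ_[2] ⊗[ℤ_[2]] L),
      (c • z) = (algebraMap ℤ_[2] ℚ_[2] c) • z := fun c z => (algebraMap_smul ℚ_[2] c z).symm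
  have htwo : (algebraMap ℤ_[2] ℚ_[2]) 2 = 2 := map_ofNat _ 2
  obtain ⟨i₀, hi₀⟩ : ∃ i, IsUnit (bL.repr e i) := by
    by_contra hcon
    push_neg at hcon
    have hdvd : ∀ i, ∃ d, bL.repr e i = 2 * d := fun i => notunit_dvd _ (hcon i)
    choose df hdf using hdvd
    refine hprim (∑ i, df i • bL i) ?_
    rw [Finset.smul_sum]
    have : ∀ i ∈ Finset.univ, (2:ℤ_[2]) • df i • bL i = bL.repr e i • bL i := by
      intro i _
      rw [smul_smul, ← hdf]
    rw [Finset.sum_congr rfl this, Module.Basis.sum_repr]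
  have hrange : ∀ r : ℚ_[2], r • ι e ∈ LinearMap.range ι →
      ∃ s : ℤ_[2], algebraMap ℤ_[2] ℚ_[2] s = r := by
    intro r ⟨x, hx⟩
    have hco := hcoord x i₀
    rw [hx] at hco
    rw [map_smul, Finsupp.smul_apply, hcoord, smul_eq_mul] at hco
    have hu0 : algebraMap ℤ_[2] ℚ_[2] (bL.repr e i₀) ≠ 0 := by
      intro h
      rw [show (0:ℚ_[2]) = algebraMap ℤ_[2] ℚ_[2] 0 by simp] at h
      exact hi₀.ne_zero (halg_inj h)
    refine ⟨bL.repr x i₀ * ↑hi₀.unit⁻¹, ?_⟩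
    have huinv : (algebraMap ℤ_[2] ℚ_[2]) ↑hi₀.unit⁻¹ *
        (algebraMap ℤ_[2] ℚ_[2]) (bL.repr e i₀) = 1 := by
      rw [← map_mul]
      have h1 := hi₀.unit.inv_mul
      rw [IsUnit.unit_spec] at h1
      rw [h1, map_one]
    apply mul_right_cancel₀ hu0
    rw [map_mul, mul_assoc, huinv, mul_one]
    exact hco.symm
  have hhalfmem : ∀ x : L, ((2⁻¹:ℚ_[2]) • ι x ∈ LinearMap.range ι ↔
      ∃ y : L, x = (2:ℤ_[2]) • y) := by
    intro x
    constructor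
    · rintro ⟨y, hy⟩
      refine ⟨y, hι_inj ?_⟩
      rw [map_smul, hsm, htwo, hy, smul_smul]
      norm_num
    · rintro ⟨y, rfl⟩
      refine ⟨y, ?_⟩
      rw [map_smul, hsm, htwo, smul_smul]
      norm_num
  have hmk_sub : ∀ z w : ℚ_[2] ⊗[ℤ_[2]] L,
      padicTorusMk L z = padicTorusMk L w ↔ z - w ∈ LinearMap.range ι := by
    intro z w
    rw [show padicTorusMk L z = ((z : ℚ_[2] ⊗[ℤ_[2]] L) : PadicTorus L) from rfl,
      show padicTorusMk L w = ((w : ℚ_[2] ⊗[ℤ_[2]] L) : PadicTorus L) from rfl,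
      QuotientAddGroup.eq_iff_sub_mem]
    exact Submodule.mem_toAddSubgroup _
  have hmk0 : ∀ z : ℚ_[2] ⊗[ℤ_[2]] L,
      padicTorusMk L z = 0 ↔ z ∈ LinearMap.range ι := by
    intro z
    rw [← map_zero (padicTorusMk L), hmk_sub, sub_zero]
  -- facts about an arbitrary strict marking
  have hmark : ∀ p : L × (L →ₗ[ℤ_[2]] ℤ_[2]), IsStrictMarkingP σ p →
      (p.1 ≠ 0 ∧ p.2 p.1 = -2 ∧ σ p.1 = -p.1 ∧ (∃ c : ℤ_[2], p.1 = c • e) ∧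
        ∀ x : L, p.2 x • p.1 = α x • e) := by
    rintro ⟨b, β⟩ hp
    have hrel : ∀ x : L, β x • b = α x • e := by
      intro x
      have h1 := hαspec x
      have h2 := hp x
      rw [h1] at h2
      exact (add_left_cancel h2).symm
    have he2 : α e • e ≠ 0 := by
      rw [hαe]
      intro h
      rcases hsmul _ _ h with h' | h'
      · exact two_ne (neg_eq_zero.mp h')
      · exact he0 h'
    have hb0 : b ≠ 0 := by
      intro h
      refine he2 ?_
      rw [← hrel e, h, smul_zero]
    have hβe : β e ≠ 0 := by
      intro h
      refine he2 ?_
      rw [← hrel e, h, zero_smul]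
    have hββ : β b = -2 := by
      have key : (β e * (2 + β b)) • b = 0 := by
        have h1 := hp (σ e)
        rw [hσσ, hp e, add_assoc] at h1
        have h3 := (left_eq_add.mp h1)
        have h2 : β (e + β e • b) = β e + β e * β b := by
          rw [map_add, map_smul, smul_eq_mul]
        rw [h2] at h3
        have h5 : β e * (2 + β b) = β e + (β e + β e * β b) := by ring
        rw [h5, add_smul]
        exact h3
      rcases hsmul _ _ key with h' | h'
      · rcases mul_eq_zero.mp h' with h'' | h''
        · exact absurd h'' hβe
        · exact eq_neg_of_add_eq_zero_right h''
      · exact absurd h' hb0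
    have hσb : σ b = -b := by
      rw [hp b, hββ, neg_smul, two_smul]
      abel
    exact ⟨hb0, hββ, hσb, hspan b hσb, hrel⟩
  refine ⟨?_, ?_, ?_⟩
  · -- Claim 1: image of a strict marking lies in the torus markings
    rintro ⟨b, β⟩ hp
    obtain ⟨hb0, hββ, hσb, ⟨c, hc⟩, hrel⟩ := hmark _ hp
    replace hb0 : b ≠ 0 := hb0
    replace hc : b = c • e := hc
    replace hσb : σ b = -b := hσb
    replace hrel : ∀ x : L, β x • b = α x • e := hrel
    simp only [PadicTorusMarkings, Set.mem_setOf_eq]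
    refine ⟨⟨(2⁻¹:ℚ_[2]) • ι b, ?_, rfl⟩, ?_, ?_⟩
    · exact Submodule.smul_mem _ _ (Submodule.subset_span ⟨b, hσb, rfl⟩)
    · show (2:ℤ) • padicTorusMk L ((2⁻¹:ℚ_[2]) • ι b) = 0
      rw [← map_zsmul (padicTorusMk L), hmk0]
      have heq : (2:ℤ) • ((2⁻¹:ℚ_[2]) • ι b) = ι b := by
        rw [two_zsmul, ← two_smul ℚ_[2], smul_smul]
        norm_num
      rw [heq]
      exact ⟨b, rfl⟩
    · intro hnt h0
      rw [show markingImageP (b, β) = padicTorusMk L ((2⁻¹:ℚ_[2]) • ι b) from rfl,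
        hmk0] at h0
      obtain ⟨y, hy⟩ := (hhalfmem b).mp h0
      refine hnt (fun x => ⟨β x • y, ?_⟩)
      have := hp x
      rw [this, add_sub_cancel_left, hy, smul_smul, smul_smul, mul_comm]
  · -- Claim 2: fibers are exactly the unit-equivalence classes
    rintro ⟨b, β⟩ ⟨b', β'⟩ hp hq
    obtain ⟨hb0, hββ, hσb, ⟨c, hc⟩, hrel⟩ := hmark _ hp
    obtain ⟨hb0', hββ', hσb', ⟨c', hc'⟩, hrel'⟩ := hmark _ hq
    replace hb0 : b ≠ 0 := hb0
    replace hc : b = c • e := hc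
    replace hrel : ∀ x : L, β x • b = α x • e := hrel
    replace hb0' : b' ≠ 0 := hb0'
    replace hc' : b' = c' • e := hc'
    replace hrel' : ∀ x : L, β' x • b' = α x • e := hrel'
    have hc0 : c ≠ 0 := fun h => hb0 (by rw [hc, h, zero_smul])
    have hc0' : c' ≠ 0 := fun h => hb0' (by rw [hc', h, zero_smul])
    have hcoef : ∀ x, β x * c = α x := by
      intro x
      refine hcancel _ _ ?_
      rw [← smul_smul, ← hc, hrel]
    have hcoef' : ∀ x, β' x * c' = α x := by
      intro x
      refine hcancel _ _ ?_
      rw [← smul_smul, ← hc', hrel']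
    constructor
    · intro himg
      rw [show markingImageP (b, β) = padicTorusMk L ((2⁻¹:ℚ_[2]) • ι b) from rfl,
        show markingImageP (b', β') = padicTorusMk L ((2⁻¹:ℚ_[2]) • ι b') from rfl,
        hmk_sub] at himg
      have hsub : ∃ y : L, b - b' = (2:ℤ_[2]) • y := by
        apply (hhalfmem (b - b')).mp
        rw [map_sub, smul_sub]
        exact himg
      have hdvdcc : (2:ℤ_[2]) ∣ (c - c') := by
        obtain ⟨y, hy⟩ := hsub
        apply hE4 (c - c') y
        rw [sub_smul, ← hc, ← hc', hy]
      have h1 : β e * c = -2 := by rw [hcoef e, hαe]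
      have h2 : β' e * c' = -2 := by rw [hcoef' e, hαe]
      obtain ⟨u, hu⟩ : ∃ u : ℤ_[2]ˣ, c' = (u:ℤ_[2]) * c := by
        by_cases hdc : (2:ℤ_[2]) ∣ c
        · obtain ⟨d, hd⟩ := hdc
          have hdc' : (2:ℤ_[2]) ∣ c' := by
            have : c' = c - (c - c') := by ring
            rw [this]
            exact dvd_sub ⟨d, hd⟩ hdvdcc
          obtain ⟨d', hd'⟩ := hdc'
          have hd1 : d * (-(β e)) = 1 := by
            apply mul_left_cancel₀ two_ne
            have : (2:ℤ_[2]) * (d * -(β e)) = -(β e * c) := by rw [hd]; ring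
            rw [this, h1, mul_one]
            ring
          have hd1' : d' * (-(β' e)) = 1 := by
            apply mul_left_cancel₀ two_ne
            have : (2:ℤ_[2]) * (d' * -(β' e)) = -(β' e * c') := by rw [hd']; ring
            rw [this, h2, mul_one]
            ring
          refine ⟨⟨d' * (-(β e)), d * (-(β' e)), ?_, ?_⟩, ?_⟩
          · rw [show (d' * -(β e)) * (d * -(β' e)) = (d * -(β e)) * (d' * -(β' e)) by ring,
              hd1, hd1', one_mul]
          · rw [show (d * -(β' e)) * (d' * -(β e)) = (d * -(β e)) * (d' * -(β' e)) by ring,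
              hd1, hd1', one_mul]
          · show c' = (d' * -(β e)) * c
            have hbc : -(β e) * c = 2 := by
              rw [neg_mul, h1, neg_neg]
            rw [hd', mul_assoc, hbc, mul_comm d' 2]
        · have hu1 : IsUnit c := by
            by_contra h
            exact hdc (notunit_dvd _ h)
          have hdc' : ¬ (2:ℤ_[2]) ∣ c' := by
            intro h
            refine hdc ?_
            have : c = c' + (c - c') := by ring
            rw [this]
            exact dvd_add h hdvdcc
          have hu2 : IsUnit c' := by
            by_contra h
            exact hdc' (notunit_dvd _ h)
          refine ⟨hu2.unit * hu1.unit⁻¹, ?_⟩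
          have hx1 := hu1.unit.inv_mul
          rw [IsUnit.unit_spec] at hx1
          rw [Units.val_mul, mul_assoc, hx1, mul_one, IsUnit.unit_spec]
      refine ⟨u, ?_, ?_⟩
      · show b' = (u:ℤ_[2]) • b
        rw [hc', hu, mul_smul, ← hc]
      · have hβu : ∀ x, β' x = ((u⁻¹:ℤ_[2]ˣ):ℤ_[2]) * β x := by
          intro x
          have h3 : β' x * c' = β x * c := by rw [hcoef, hcoef']
          rw [hu] at h3
          have h4 : (β' x * (u:ℤ_[2])) * c = β x * c := by rw [← h3]; ring
          have h5 := mul_right_cancel₀ hc0 h4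
          calc β' x = ((u⁻¹:ℤ_[2]ˣ):ℤ_[2]) * ((u:ℤ_[2]) * β' x) := by
                rw [← mul_assoc, ← Units.val_mul]
                simp
            _ = ((u⁻¹:ℤ_[2]ˣ):ℤ_[2]) * β x := by rw [mul_comm ((u:ℤ_[2])) (β' x), h5]
        ext x
        simp only [LinearMap.smul_apply, smul_eq_mul]
        exact hβu x
    · rintro ⟨u, hqb, hqβ⟩
      rw [show markingImageP (b, β) = padicTorusMk L ((2⁻¹:ℚ_[2]) • ι b) from rfl,
        show markingImageP (b', β') = padicTorusMk L ((2⁻¹:ℚ_[2]) • ι b') from rfl,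
        hmk_sub]
      obtain ⟨t, ht⟩ := hunit1 u
      have hb' : b' = b + (2:ℤ_[2]) • (t • b) := by
        have : (u:ℤ_[2]) = 1 + 2 * t := by rw [← ht]; ring
        rw [show b' = (b', β').1 from rfl, hqb]
        show (u:ℤ_[2]) • b = b + (2:ℤ_[2]) • t • b
        rw [this, add_smul, one_smul, smul_smul]
      refine ⟨-(t • b), ?_⟩
      rw [hb']
      rw [map_neg, map_add, smul_add, map_smul (ι) (2:ℤ_[2]), hsm, htwo, smul_smul]
      rw [map_smul]
      norm_num
  · -- Claim 3: surjectivity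
    intro h hmem
    simp only [PadicTorusMarkings, Set.mem_setOf_eq] at hmem
    obtain ⟨⟨z, hz_span, hz_mk⟩, h2, h3⟩ := hmem
    have hz : ∃ t : ℚ_[2], z = t • ι e := by
      have hle : Submodule.span ℚ_[2] (⇑ι '' {x : L | σ x = -x}) ≤
          (Submodule.span ℚ_[2] {ι e}) := by
        rw [Submodule.span_le]
        rintro _ ⟨x, hx, rfl⟩
        obtain ⟨c, rfl⟩ := hspan x hx
        rw [map_smul, hsm]
        exact Submodule.smul_mem _ _ (Submodule.mem_span_singleton_self _)
      obtain ⟨t, ht⟩ := Submodule.mem_span_singleton.mp (hle hz_span)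
      exact ⟨t, ht.symm⟩
    obtain ⟨t, rfl⟩ := hz
    have h2' : ((2:ℚ_[2]) * t) • ι e ∈ LinearMap.range ι := by
      rw [← hz_mk, ← map_zsmul (padicTorusMk L)] at h2
      have heq : (2:ℤ) • (t • ι e) = ((2:ℚ_[2]) * t) • ι e := by
        rw [two_zsmul, ← two_smul ℚ_[2], smul_smul]
      rw [heq, hmk0] at h2
      exact h2
    obtain ⟨s, hs⟩ := hrange _ h2'
    by_cases hds : (2:ℤ_[2]) ∣ s
    · obtain ⟨s₁, hs₁⟩ := hds
      have hteq : t = algebraMap ℤ_[2] ℚ_[2] s₁ := by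
        have hh : algebraMap ℤ_[2] ℚ_[2] (2 * s₁) = 2 * t := by rw [← hs₁]; exact hs
        rw [map_mul, htwo] at hh
        exact (mul_left_cancel₀ (by norm_num : (2:ℚ_[2]) ≠ 0) hh).symm
      have hz0 : t • ι e ∈ LinearMap.range ι := ⟨s₁ • e, by rw [map_smul, hsm, hteq]⟩
      have hh0 : h = 0 := by rw [← hz_mk, hmk0]; exact hz0
      have htriv : ∀ x : L, ∃ y : L, σ x - x = (2:ℤ_[2]) • y := by
        by_contra hcon
        exact (h3 hcon) hh0
      have hαdvd : ∀ x : L, ∃ g, α x = 2 * g := by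
        intro x
        obtain ⟨y, hy⟩ := htriv x
        have hax := hαf x
        rw [hax] at hy
        exact hE4 _ y hy
      choose gf hgf using hαdvd
      have hgadd : ∀ x y, gf (x + y) = gf x + gf y := by
        intro x y
        apply mul_left_cancel₀ two_ne
        rw [← hgf, map_add, hgf, hgf]
        ring
      have hgsmul : ∀ (c : ℤ_[2]) x, gf (c • x) = c * gf x := by
        intro c x
        apply mul_left_cancel₀ two_ne
        rw [← hgf, map_smul, smul_eq_mul, hgf]
        ring
      refine ⟨((2:ℤ_[2]) • e, { toFun := gf, map_add' := hgadd, map_smul' := hgsmul }), ?_, ?_⟩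
      · intro x
        show σ x = x + gf x • ((2:ℤ_[2]) • e)
        rw [hαspec x, smul_smul, mul_comm, ← hgf]
      · show padicTorusMk L ((2⁻¹:ℚ_[2]) • ι ((2:ℤ_[2]) • e)) = h
        rw [hh0, hmk0]
        refine ⟨e, ?_⟩
        rw [map_smul, hsm, htwo, smul_smul]
        norm_num
    · have hus : IsUnit s := by
        by_contra hcon
        exact hds (notunit_dvd _ hcon)
      obtain ⟨w, hw⟩ := hunit1 hus.unit
      rw [IsUnit.unit_spec] at hw
      refine ⟨(e, α), hαspec, ?_⟩
      rw [← hz_mk]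
      show padicTorusMk L ((2⁻¹:ℚ_[2]) • ι e) = padicTorusMk L (t • ι e)
      apply (hmk_sub _ _).mpr
      refine ⟨-(w • e), ?_⟩
      have key : (2⁻¹:ℚ_[2]) - t = -(algebraMap ℤ_[2] ℚ_[2] w) := by
        apply mul_left_cancel₀ (show (2:ℚ_[2]) ≠ 0 by norm_num)
        have hrhs : (2:ℚ_[2]) * -(algebraMap ℤ_[2] ℚ_[2] w) =
            -(algebraMap ℤ_[2] ℚ_[2] (2 * w)) := by
          rw [map_mul, htwo]
          ring
        have hsw : (2:ℤ_[2]) * w = s - 1 := hw.symm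
        rw [hrhs, hsw, map_sub, map_one, hs]
        ring
      calc ι (-(w • e)) = -(algebraMap ℤ_[2] ℚ_[2] w • ι e) := by
            rw [map_neg, map_smul, hsm]
        _ = ((2⁻¹:ℚ_[2]) - t) • ι e := by rw [key, neg_smul]
        _ = (2⁻¹:ℚ_[2]) • ι e - t • ι e := by rw [sub_smul]
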